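/- arXiv:2508.20718 — 2 statements merged into one kernel-verified Lean document; each statement's English description precedes it below -/
import Mathlib

section
/- Let H and H' be tokenizations over an alphabet α such that every token of H and every token of H' is nonempty and H.flatten = H'.flatten. If no index of H' is a CIT (i.e., the interval of every token of H' equals the interval of some token of H), then H = H'. -/
/-- The interval of the `i`-th token of a tokenization `H`. -/
def itv {α : Type*} (H : List (List α)) (i : ℕ) : ℕ × ℕ :=
  (((H.take i).map List.length).sum,
   ((H.take i).map List.length).sum + (H.getD i []).length)

lemma itv_cons_succ {α : Type*} (t : List α) (L : List (List α)) (j : ℕ) :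
    itv (t :: L) (j+1) = (t.length + (itv L j).1, t.length + (itv L j).2) := by
  simp [itv, Nat.add_assoc]

lemma itv_zero_fst {α : Type*} (L : List (List α)) : (itv L 0).1 = 0 := by
  simp [itv]

/-- If all tokens of `H` and `H'` are nonempty, `H.flatten = H'.flatten`, and no
index of `H'` is a CIT (every interval of a token of `H'` equals the interval of
some token of `H`), then `H = H'`. -/
theorem eq_of_no_cit {α : Type*} (H H' : List (List α))
    (hH : ∀ t ∈ H, t ≠ []) (hH' : ∀ t ∈ H', t ≠ [])
    (hflat : H.flatten = H'.flatten)
    (h : ∀ j, j < H'.length → ∃ i, i < H.length ∧ itv H' j = itv H i) :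
    H = H' := by
  induction H' generalizing H with
  | nil =>
    simp only [List.flatten_nil] at hflat
    rw [List.flatten_eq_nil_iff] at hflat
    cases H with
    | nil => rfl
    | cons u Hs => exact absurd (hflat u (by simp)) (hH u (by simp))
  | cons t rest ih =>
    obtain ⟨i, hi, hitv⟩ := h 0 (by simp)
    cases H with
    | nil => simp at hi
    | cons u Hs =>
      -- i must be 0
      have hi0 : i = 0 := by
        by_contra hne
        obtain ⟨i', rfl⟩ := Nat.exists_eq_succ_of_ne_zero hne
        have h1 : (itv (t :: rest) 0).1 = (itv (u :: Hs) (i'+1)).1 := by rw [hitv]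
        rw [itv_zero_fst, itv_cons_succ] at h1
        have : u ≠ [] := hH u (by simp)
        have : 0 < u.length := List.length_pos_iff.mpr this
        omega
      subst hi0
      have hlen : t.length = u.length := by
        have := congrArg Prod.snd hitv
        simpa [itv] using this
      have hut : u = t := by
        have h1 : (u :: Hs).flatten.take u.length = u := by
          simp [List.take_append_of_le_length]
        have h2 : (t :: rest).flatten.take t.length = t := by
          simp [List.take_append_of_le_length]
        rw [hflat] at h1
        rw [hlen] at h2
        exact h1.symm.trans h2
      subst hut
      have hflat' : Hs.flatten = rest.flatten := by
        have := hflat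
        simpa using this
      congr 1
      refine ih Hs (fun s hs => hH s (by simp [hs])) (fun s hs => hH' s (by simp [hs]))
        hflat' ?_
      intro j hj
      obtain ⟨i, hi2, hitv2⟩ := h (j+1) (by simpa using Nat.succ_lt_succ hj)
      cases i with
      | zero =>
        exfalso
        have h1 := congrArg Prod.fst hitv2
        rw [itv_cons_succ, itv_zero_fst] at h1
        have : 0 < u.length := List.length_pos_iff.mpr (hH u (by simp))
        omega
      | succ i' =>
        refine ⟨i', by simpa using hi2, ?_⟩
        rw [itv_cons_succ, itv_cons_succ] at hitv2
        have h1 := congrArg Prod.fst hitv2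
        have h2 := congrArg Prod.snd hitv2
        simp only at h1 h2
        exact Prod.ext (by omega) (by omega)
end

section
/- Let H and H' be tokenizations over an alphabet α such that every token of H and every token of H' is nonempty and H.flatten = H'.flatten. If tokenization inconsistency holds (H ≠ H'), then there exists an SIT of H and there exists a CIT of H'. Consequently, for tokenizations with nonempty tokens, TI is equivalent to the existence of an SIT and also equivalent to the existence of a CIT. -/
lemma itv_succ {α : Type*} (t : List α) (T : List (List α)) (i : ℕ) :
    itv (t :: T) (i + 1) = (t.length + (itv T i).1, t.length + (itv T i).2) := by
  simp [itv, Nat.add_assoc]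

lemma itv_fst_zero {α : Type*} (H' : List (List α)) (hH' : ∀ t ∈ H', t ≠ [])
    (j : ℕ) (hj : j < H'.length) (h0 : (itv H' j).1 = 0) : j = 0 := by
  by_contra h
  cases H' with
  | nil => simp at hj
  | cons t' T' =>
    have hne := hH' t' (by simp)
    have hpos : 0 < t'.length := List.length_pos_iff.mpr hne
    have hmem : t' ∈ (t' :: T').take j := by
      cases j with
      | zero => exact absurd rfl h
      | succ n => simp [List.take_succ_cons]
    have hle : t'.length ≤ (itv (t' :: T') j).1 := by
      simpa [itv] using List.single_le_sum (by simp) _ (List.mem_map_of_mem (f := List.length) hmem)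
    omega

lemma eq_of_no_sit {α : Type*} (H : List (List α)) : ∀ (H' : List (List α)),
    (∀ t ∈ H, t ≠ []) → (∀ t ∈ H', t ≠ []) → H.flatten = H'.flatten →
    (∀ i, i < H.length → ∃ j, j < H'.length ∧ itv H i = itv H' j) → H = H' := by
  induction H with
  | nil =>
    intro H' _ hH' hflat _
    cases H' with
    | nil => rfl
    | cons t' T' =>
      exfalso
      have h0 : t' ++ T'.flatten = ([] : List α) := by simpa using hflat.symm
      exact hH' t' (by simp) ((List.append_eq_nil_iff.mp h0).1)
  | cons t T ih =>
    intro H' hH hH' hflat hcov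
    obtain ⟨j, hj, hij⟩ := hcov 0 (by simp)
    have hj0 : j = 0 := itv_fst_zero H' hH' j hj (by rw [← hij]; simp [itv])
    subst hj0
    cases H' with
    | nil => simp at hj
    | cons t' T' =>
      have hlen : t.length = t'.length := by
        have := congrArg Prod.snd hij
        simpa [itv] using this
      have hfl : t ++ T.flatten = t' ++ T'.flatten := by simpa using hflat
      obtain ⟨ht, hT⟩ := List.append_inj hfl hlen
      subst ht
      have hrest : T = T' := by
        apply ih T' (fun x hx => hH x (by simp [hx])) (fun x hx => hH' x (by simp [hx])) hT
        intro i hi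
        obtain ⟨j, hj2, hij2⟩ := hcov (i + 1) (by simpa using Nat.succ_lt_succ hi)
        cases j with
        | zero =>
          exfalso
          have h1 : t.length + (itv T i).1 = (itv (t :: T') 0).1 := by
            have := congrArg Prod.fst hij2
            rwa [itv_succ] at this
          simp [itv] at h1
          exact (hH t (by simp)) h1.1
        | succ j =>
          refine ⟨j, by simpa using Nat.lt_of_succ_lt_succ hj2, ?_⟩
          rw [itv_succ, itv_succ] at hij2
          have h1 := congrArg Prod.fst hij2
          have h2 := congrArg Prod.snd hij2
          simp only [] at h1 h2
          rw [Prod.ext_iff]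
          constructor <;> omega
      rw [hrest]

/-- For tokenizations with nonempty tokens and equal flattenings:
if TI holds (`H ≠ H'`) then there exists an SIT of `H` and a CIT of `H'`;
consequently TI is equivalent to the existence of an SIT and also equivalent to
the existence of a CIT. -/
theorem ti_iff_sit_and_cit {α : Type*} (H H' : List (List α))
    (hH : ∀ t ∈ H, t ≠ []) (hH' : ∀ t ∈ H', t ≠ [])
    (hflat : H.flatten = H'.flatten) :
    (H ≠ H' →
      (∃ i, i < H.length ∧ ∀ j, j < H'.length → itv H i ≠ itv H' j) ∧
      (∃ j, j < H'.length ∧ ∀ i, i < H.length → itv H' j ≠ itv H i)) ∧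
    (H ≠ H' ↔ ∃ i, i < H.length ∧ ∀ j, j < H'.length → itv H i ≠ itv H' j) ∧
    (H ≠ H' ↔ ∃ j, j < H'.length ∧ ∀ i, i < H.length → itv H' j ≠ itv H i) := by
  have key : ∀ (A B : List (List α)), (∀ t ∈ A, t ≠ []) → (∀ t ∈ B, t ≠ []) →
      A.flatten = B.flatten → A ≠ B →
      ∃ i, i < A.length ∧ ∀ j, j < B.length → itv A i ≠ itv B j := by
    intro A B hA hB hf hne
    by_contra h
    push_neg at h
    exact hne (eq_of_no_sit A B hA hB hf h)
  have sit_ne : (∃ i, i < H.length ∧ ∀ j, j < H'.length → itv H i ≠ itv H' j) → H ≠ H' := by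
    rintro ⟨i, hi, hall⟩ rfl
    exact hall i hi rfl
  have cit_ne : (∃ j, j < H'.length ∧ ∀ i, i < H.length → itv H' j ≠ itv H i) → H ≠ H' := by
    rintro ⟨j, hj, hall⟩ rfl
    exact hall j hj rfl
  refine ⟨fun hne => ⟨key H H' hH hH' hflat hne, key H' H hH' hH hflat.symm (Ne.symm hne)⟩,
    ⟨fun hne => key H H' hH hH' hflat hne, sit_ne⟩,
    ⟨fun hne => key H' H hH' hH hflat.symm (Ne.symm hne), cit_ne⟩⟩
end
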